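/- Let D = ⟨x, y | x^(2^r) = y² = [x,y]² = [x,[x,y]] = [y,[x,y]] = 1⟩ with r ≥ 2, let z := [x,y], and let c ∈ Z(D) have order 2^(r-1) with z ∉ ⟨c⟩. Then if k < r - 1 and a ∈ ⟨c⟩ has order 2^k, the quotient D/⟨a⟩ is isomorphic to the Rédei group ⟨x, y | x^(2^(r-k)) = y² = [x,y]² = [x,[x,y]] = [y,[x,y]] = 1⟩. -/

import Mathlib

open scoped commutatorElement

/-- The generator `x` of the free group on two letters. -/
def gx : FreeGroup (Fin 2) := FreeGroup.of 0

/-- The generator `y` of the free group on two letters. -/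
def gy : FreeGroup (Fin 2) := FreeGroup.of 1

/-- The relations of the Rédei presentation with parameters `r`, `s`:
`x^(2^r)`, `y^(2^s)`, `⁅x,y⁆^2`, `⁅x,⁅x,y⁆⁆`, `⁅y,⁅x,y⁆⁆`,
where `⁅a,b⁆ = a*b*a⁻¹*b⁻¹`. -/
def redeiRels (r s : ℕ) : Set (FreeGroup (Fin 2)) :=
  {gx ^ (2 ^ r), gy ^ (2 ^ s), ⁅gx, gy⁆ ^ 2, ⁅gx, ⁅gx, gy⁆⁆, ⁅gy, ⁅gx, gy⁆⁆}

/-- The Rédei group `⟨x,y ∣ x^(2^r) = y^(2^s) = [x,y]^2 = [x,[x,y]] = [y,[x,y]] = 1⟩`. -/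
abbrev RedeiGroup (r s : ℕ) := PresentedGroup (redeiRels r s)

/-- The image of the generator `x` in the Rédei group. -/
def Dx (r s : ℕ) : RedeiGroup r s := PresentedGroup.of 0

/-- The image of the generator `y` in the Rédei group. -/
def Dy (r s : ℕ) : RedeiGroup r s := PresentedGroup.of 1

/-- The element `z = [x,y]` of the Rédei group. -/
def Dz (r s : ℕ) : RedeiGroup r s := ⁅Dx r s, Dy r s⁆

/-!
An element of `D` with odd `y`-exponent does not commute with `x`, because `z ≠ 1` (as the
dihedral group of order 8 shows), so a central element `c` has the form `x^i z^e` and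
`c^2 ∈ ⟨x⟩`. Since `c` is a `2`-element and `|a| < |c|`, `a` is a power of `c^2`; hence `⟨a⟩` is
the subgroup of order `2^k` of the cyclic group `⟨x⟩` of order `2^r`, namely `⟨x^(2^(r-k))⟩`.
Adding the relation `x^(2^(r-k)) = 1` to the presentation of `D` makes `x^(2^r) = 1` redundant.
-/

open Subgroup

section GroupLemmas

variable {G : Type*} [Group G]

lemma mem_zpowers_pow_of_orderOf_ne {p n : ℕ} (hp : p.Prime) {a c : G}
    (hc : orderOf c = p ^ n) (ha : a ∈ zpowers c) (hne : orderOf a ≠ orderOf c) :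
    a ∈ zpowers (c ^ p) := by
  have hfin : IsOfFinOrder c := orderOf_pos_iff.1 (hc ▸ pow_pos hp.pos n)
  obtain ⟨m, rfl⟩ := hfin.mem_powers_iff_mem_zpowers.2 ha
  by_cases hpm : p ∣ m
  · obtain ⟨m, rfl⟩ := hpm
    exact ⟨m, by simp [pow_mul]⟩
  · refine absurd (Nat.Coprime.orderOf_pow ?_) hne
    rw [hc]
    exact ((Nat.Prime.coprime_iff_not_dvd hp).2 hpm).pow_left n

lemma zpowers_eq_zpowers_pow_of_mul_orderOf_eq {a x : G} {d : ℕ} (hx : orderOf x ≠ 0)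
    (ha : a ∈ zpowers x) (hd : d * orderOf a = orderOf x) : zpowers a = zpowers (x ^ d) := by
  have ha0 : 0 < orderOf a := Nat.pos_of_ne_zero (right_ne_zero_of_mul (hd ▸ hx))
  have hd0 : 0 < d := Nat.pos_of_ne_zero (left_ne_zero_of_mul (hd ▸ hx))
  have hxd : orderOf (x ^ d) = orderOf a := by
    rw [orderOf_pow_of_dvd hd0.ne' (Dvd.intro _ hd), ← hd, Nat.mul_div_cancel_left _ hd0]
  obtain ⟨m, rfl⟩ := (orderOf_pos_iff.1 (Nat.pos_of_ne_zero hx)).mem_powers_iff_mem_zpowers.2 ha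
  dsimp only at hd hxd ha0 ⊢
  obtain ⟨m, rfl⟩ : d ∣ m := by
    have h : orderOf x ∣ m * orderOf (x ^ m) :=
      orderOf_dvd_of_pow_eq_one (by rw [pow_mul, pow_orderOf_eq_one])
    rw [← hd] at h
    exact Nat.dvd_of_mul_dvd_mul_right ha0 (by simpa only [Nat.mul_comm m] using h)
  have := (orderOf_pos_iff.1 (hxd ▸ ha0)).finite_zpowers.to_subtype
  rw [pow_mul] at hxd ⊢
  exact eq_of_le_of_card_ge (zpowers_le.2 (npow_mem_zpowers _ _))
    (by rw [Nat.card_zpowers, Nat.card_zpowers, hxd])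

lemma normalClosure_singleton_eq_of_eq_zpowers {N : Subgroup G} [N.Normal] {g : G}
    (hN : N = zpowers g) :
    normalClosure {g} = N := by
  rw [← normalClosure_closure_eq_normalClosure, ← zpowers_eq_closure, ← hN,
    normalClosure_eq_self]

end GroupLemmas

structure IsRedeiPair {G : Type*} [Group G] (r s : ℕ) (g h : G) : Prop where
  pow_fst : g ^ 2 ^ r = 1
  pow_snd : h ^ 2 ^ s = 1
  commutator_sq : ⁅g, h⁆ ^ 2 = 1
  commute_fst : Commute g ⁅g, h⁆
  commute_snd : Commute h ⁅g, h⁆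

namespace IsRedeiPair

variable {G H : Type*} [Group G] [Group H] {r s t : ℕ} {g h : G}

lemma map (hp : IsRedeiPair r s g h) (f : G →* H) : IsRedeiPair r s (f g) (f h) where
  pow_fst := by rw [← map_pow, hp.pow_fst, map_one]
  pow_snd := by rw [← map_pow, hp.pow_snd, map_one]
  commutator_sq := by rw [← map_commutatorElement, ← map_pow, hp.commutator_sq, map_one]
  commute_fst := map_commutatorElement f g h ▸ hp.commute_fst.map f
  commute_snd := map_commutatorElement f g h ▸ hp.commute_snd.map f

lemma mono (hp : IsRedeiPair t s g h) (htr : t ≤ r) : IsRedeiPair r s g h :=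
  { hp with
    pow_fst := by
      obtain ⟨m, hm⟩ := pow_dvd_pow 2 htr
      rw [hm, pow_mul, hp.pow_fst, one_pow] }

lemma lift_rels (hp : IsRedeiPair r s g h) :
    ∀ w ∈ redeiRels r s, FreeGroup.lift ![g, h] w = 1 := by
  have hx : FreeGroup.lift ![g, h] gx = g := FreeGroup.lift_apply_of
  have hy : FreeGroup.lift ![g, h] gy = h := FreeGroup.lift_apply_of
  simp only [redeiRels, Set.mem_insert_iff, Set.mem_singleton_iff]
  rintro w (rfl | rfl | rfl | rfl | rfl) <;>
    simp only [map_pow, map_commutatorElement, hx, hy, commutatorElement_eq_one_iff_commute]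
  exacts [hp.pow_fst, hp.pow_snd, hp.commutator_sq, hp.commute_fst, hp.commute_snd]

end IsRedeiPair

namespace RedeiGroup

variable {G : Type*} [Group G] {r s t : ℕ} {g h : G}

def lift (hp : IsRedeiPair r s g h) : RedeiGroup r s →* G :=
  PresentedGroup.toGroup hp.lift_rels

@[simp]
lemma lift_Dx (hp : IsRedeiPair r s g h) : lift hp (Dx r s) = g :=
  PresentedGroup.toGroup.of _

@[simp]
lemma lift_Dy (hp : IsRedeiPair r s g h) : lift hp (Dy r s) = h :=
  PresentedGroup.toGroup.of _

@[simp]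
lemma lift_Dz (hp : IsRedeiPair r s g h) : lift hp (Dz r s) = ⁅g, h⁆ := by
  rw [Dz, map_commutatorElement, lift_Dx, lift_Dy]

lemma hom_ext {φ ψ : RedeiGroup r s →* G} (hx : φ (Dx r s) = ψ (Dx r s))
    (hy : φ (Dy r s) = ψ (Dy r s)) : φ = ψ :=
  PresentedGroup.ext fun i => by fin_cases i; exacts [hx, hy]

lemma isRedeiPair_Dx_Dy : IsRedeiPair r s (Dx r s) (Dy r s) := by
  have hrel {w : FreeGroup (Fin 2)} (hw : w ∈ redeiRels r s) :
      PresentedGroup.mk (redeiRels r s) w = 1 := PresentedGroup.one_of_mem hw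
  have hx : PresentedGroup.mk (redeiRels r s) gx = Dx r s := rfl
  have hy : PresentedGroup.mk (redeiRels r s) gy = Dy r s := rfl
  refine ⟨?_, ?_, ?_, ?_, ?_⟩
  · rw [← hx, ← map_pow]; exact hrel (by simp [redeiRels])
  · rw [← hy, ← map_pow]; exact hrel (by simp [redeiRels])
  · rw [← hx, ← hy, ← map_commutatorElement, ← map_pow]; exact hrel (by simp [redeiRels])
  · rw [← commutatorElement_eq_one_iff_commute, ← hx, ← hy, ← map_commutatorElement,
      ← map_commutatorElement]
    exact hrel (by simp [redeiRels])
  · rw [← commutatorElement_eq_one_iff_commute, ← hx, ← hy, ← map_commutatorElement,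
      ← map_commutatorElement]
    exact hrel (by simp [redeiRels])

lemma Dx_pow_two_pow : Dx r s ^ 2 ^ r = 1 := isRedeiPair_Dx_Dy.pow_fst

lemma Dy_pow_two_pow : Dy r s ^ 2 ^ s = 1 := isRedeiPair_Dx_Dy.pow_snd

lemma Dz_sq : Dz r s ^ 2 = 1 := isRedeiPair_Dx_Dy.commutator_sq

lemma Dz_mem_center : Dz r s ∈ center (RedeiGroup r s) := by
  have h : ∀ g, g ∈ centralizer {Dz r s} := PresentedGroup.generated_by _ _ fun i => by
    rw [mem_centralizer_singleton_iff]
    fin_cases i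
    exacts [isRedeiPair_Dx_Dy.commute_fst.eq, isRedeiPair_Dx_Dy.commute_snd.eq]
  exact mem_center_iff.2 fun g => (mem_centralizer_singleton_iff.1 (h g))

lemma commute_Dz (g : RedeiGroup r s) : Commute (Dz r s) g :=
  (mem_center_iff.1 Dz_mem_center g).symm

lemma Dy_mul_Dx : Dy r s * Dx r s = Dx r s * Dy r s * Dz r s := by
  have hz : (Dz r s)⁻¹ = Dz r s := inv_eq_of_mul_eq_one_right (by rw [← sq, Dz_sq])
  calc Dy r s * Dx r s = (Dz r s)⁻¹ * (Dx r s * Dy r s) := by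
        rw [Dz, commutatorElement_def]; group
    _ = Dx r s * Dy r s * Dz r s := by rw [hz, (commute_Dz _).eq]

lemma Dy_mul_Dx_pow (i : ℕ) : Dy r s * Dx r s ^ i = Dx r s ^ i * Dy r s * Dz r s ^ i := by
  have h : SemiconjBy (Dy r s) (Dx r s) (Dx r s * Dz r s) := by
    rw [SemiconjBy, Dy_mul_Dx, mul_assoc, ← (commute_Dz _).eq, ← mul_assoc]
  rw [(h.pow_right i).eq, (Commute.mul_pow (commute_Dz _).symm i), mul_assoc,
    ((commute_Dz _).pow_left i).eq, ← mul_assoc]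

lemma Dy_pow_mul_Dx_pow (j i : ℕ) :
    Dy r s ^ j * Dx r s ^ i = Dx r s ^ i * Dy r s ^ j * Dz r s ^ (j * i) := by
  induction j with
  | zero => simp
  | succ j ih =>
    rw [pow_succ, mul_assoc, Dy_mul_Dx_pow, ← mul_assoc, ← mul_assoc, ih,
      mul_assoc _ (Dz r s ^ _), ((commute_Dz _).pow_left _).eq, Nat.succ_mul, pow_add]
    simp only [mul_assoc]

lemma exists_eq_Dx_pow_mul_Dy_pow_mul_Dz_pow (g : RedeiGroup r s) :
    ∃ i j e : ℕ, g = Dx r s ^ i * Dy r s ^ j * Dz r s ^ e := by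
  have hx (a i j e : ℕ) : Dx r s ^ a * (Dx r s ^ i * Dy r s ^ j * Dz r s ^ e) =
      Dx r s ^ (a + i) * Dy r s ^ j * Dz r s ^ e := by
    simp only [pow_add, mul_assoc]
  have hy (b i j e : ℕ) : Dy r s ^ b * (Dx r s ^ i * Dy r s ^ j * Dz r s ^ e) =
      Dx r s ^ i * Dy r s ^ (b + j) * Dz r s ^ (b * i + e) := by
    rw [← mul_assoc, ← mul_assoc, Dy_pow_mul_Dx_pow, mul_assoc _ (Dz r s ^ _),
      ((commute_Dz _).pow_left _).eq, pow_add, pow_add]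
    simp only [mul_assoc]
  have hx_inv : (Dx r s)⁻¹ = Dx r s ^ (2 ^ r - 1) :=
    inv_eq_of_mul_eq_one_right (by rw [mul_pow_sub_one (by positivity), Dx_pow_two_pow])
  have hy_inv : (Dy r s)⁻¹ = Dy r s ^ (2 ^ s - 1) :=
    inv_eq_of_mul_eq_one_right (by rw [mul_pow_sub_one (by positivity), Dy_pow_two_pow])
  have hg : g ∈ closure (Set.range PresentedGroup.of) := by
    rw [PresentedGroup.closure_range_of]; exact mem_top g
  induction hg using closure_induction_left with
  | one => exact ⟨0, 0, 0, by simp⟩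
  | mul_left a ha g _ ih =>
    obtain ⟨n, rfl⟩ := ha
    obtain ⟨i, j, e, rfl⟩ := ih
    fin_cases n
    · exact ⟨_, _, _, (congrArg (· * _) (pow_one _).symm).trans (hx 1 i j e)⟩
    · exact ⟨_, _, _, (congrArg (· * _) (pow_one _).symm).trans (hy 1 i j e)⟩
  | inv_mul_cancel a ha g _ ih =>
    obtain ⟨n, rfl⟩ := ha
    obtain ⟨i, j, e, rfl⟩ := ih
    fin_cases n
    · exact ⟨_, _, _, (congrArg (· * _) hx_inv).trans (hx _ i j e)⟩
    · exact ⟨_, _, _, (congrArg (· * _) hy_inv).trans (hy _ i j e)⟩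

lemma orderOf_Dx : orderOf (Dx r s) = 2 ^ r := by
  have hp : IsRedeiPair r s (Multiplicative.ofAdd (1 : ZMod (2 ^ r))) 1 := by
    refine ⟨?_, one_pow _, ?_, ?_, ?_⟩
    · rw [← orderOf_dvd_iff_pow_eq_one, orderOf_ofAdd_eq_addOrderOf, ZMod.addOrderOf_one]
    all_goals simp only [commutatorElement_one_right, one_pow, Commute.one_right]
  refine Nat.dvd_antisymm (orderOf_dvd_of_pow_eq_one Dx_pow_two_pow) ?_
  have h := orderOf_map_dvd (lift hp) (Dx r s)
  rwa [lift_Dx, orderOf_ofAdd_eq_addOrderOf, ZMod.addOrderOf_one] at h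

lemma Dz_ne_one (hr : 2 ≤ r) (hs : 1 ≤ s) : Dz r s ≠ 1 := by
  have hp : IsRedeiPair r s (DihedralGroup.r 1 : DihedralGroup 4) (DihedralGroup.sr 0) := by
    have hc : ⁅(DihedralGroup.r 1 : DihedralGroup 4), (DihedralGroup.sr 0 : DihedralGroup 4)⁆ =
        DihedralGroup.r 2 := by
      decide
    refine ⟨?_, ?_, ?_, ?_, ?_⟩
    · rw [← orderOf_dvd_iff_pow_eq_one, DihedralGroup.orderOf_r_one]
      exact pow_dvd_pow 2 hr
    · rw [← orderOf_dvd_iff_pow_eq_one, DihedralGroup.orderOf_sr]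
      exact dvd_pow_self 2 (by omega)
    all_goals rw [hc]
    · decide
    all_goals show _ * _ = _ * _; decide
  intro h
  have := congrArg (lift hp) h
  rw [lift_Dz, map_one] at this
  exact absurd this (by decide)

lemma sq_mem_zpowers_Dx_of_mem_center (hr : 2 ≤ r) {c : RedeiGroup r 1}
    (hc : c ∈ center (RedeiGroup r 1)) : c ^ 2 ∈ zpowers (Dx r 1) := by
  obtain ⟨i, j, e, rfl⟩ := exists_eq_Dx_pow_mul_Dy_pow_mul_Dz_pow c
  rw [pow_eq_pow_mod j Dy_pow_two_pow, pow_one] at hc ⊢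
  rcases Nat.mod_two_eq_zero_or_one j with hj | hj <;> rw [hj] at hc ⊢
  · have hsq : (Dx r 1 ^ i * Dy r 1 ^ 0 * Dz r 1 ^ e) ^ 2 = Dx r 1 ^ (i * 2) := by
      rw [pow_zero, mul_one, ((commute_Dz _).pow_left e).symm.mul_pow, ← pow_mul, ← pow_mul,
        pow_mul' (Dz r 1), Dz_sq, one_pow, mul_one]
    exact hsq ▸ npow_mem_zpowers _ _
  · refine absurd ?_ (Dz_ne_one hr le_rfl)
    have hxc : Dx r 1 * (Dx r 1 ^ i * Dy r 1 ^ 1 * Dz r 1 ^ e) =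
        Dx r 1 ^ i * Dx r 1 * Dy r 1 * Dz r 1 ^ e := by
      rw [← (Commute.self_pow _ i).eq]; simp only [pow_one, mul_assoc]
    have hcx : (Dx r 1 ^ i * Dy r 1 ^ 1 * Dz r 1 ^ e) * Dx r 1 =
        Dx r 1 ^ i * Dx r 1 * Dy r 1 * (Dz r 1 * Dz r 1 ^ e) := by
      rw [mul_assoc _ _ (Dx r 1), ((commute_Dz (Dx r 1)).pow_left e).eq, pow_one,
        mul_assoc _ (Dy r 1), ← mul_assoc (Dy r 1), Dy_mul_Dx]
      simp only [mul_assoc]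
    have h := (mem_center_iff.1 hc (Dx r 1)).trans hcx
    rw [hxc] at h
    exact right_eq_mul.1 (mul_left_cancel h)

def quotientNormalClosureEquiv (htr : t ≤ r) :
    RedeiGroup r s ⧸ normalClosure {Dx r s ^ 2 ^ t} ≃* RedeiGroup t s :=
  let N := normalClosure {Dx r s ^ 2 ^ t}
  let toFun : RedeiGroup r s ⧸ N →* RedeiGroup t s :=
    QuotientGroup.lift N (lift (isRedeiPair_Dx_Dy.mono htr)) <| normalClosure_le_normal <|
      Set.singleton_subset_iff.2 <| by
        rw [SetLike.mem_coe, MonoidHom.mem_ker, map_pow, lift_Dx, Dx_pow_two_pow]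
  let invFun : RedeiGroup t s →* RedeiGroup r s ⧸ N := lift
    { isRedeiPair_Dx_Dy.map (QuotientGroup.mk' N) with
      pow_fst := by
        rw [← map_pow, QuotientGroup.mk'_apply, QuotientGroup.eq_one_iff]
        exact subset_normalClosure rfl }
  MonoidHom.toMulEquiv toFun invFun
    (QuotientGroup.monoidHom_ext N (hom_ext (by simp [toFun, invFun]) (by simp [toFun, invFun])))
    (hom_ext (by simp [toFun, invFun]) (by simp [toFun, invFun]))

end RedeiGroup

theorem stmt19_general (r k : ℕ) (hk : k < r - 1)
    (c : RedeiGroup r 1) (hc : c ∈ Subgroup.center (RedeiGroup r 1))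
    (hco : orderOf c = 2 ^ (r - 1))
    (a : RedeiGroup r 1) (ha : a ∈ Subgroup.zpowers c) (hao : orderOf a = 2 ^ k)
    (N : Subgroup (RedeiGroup r 1)) [N.Normal] (hN : N = Subgroup.zpowers a) :
    Nonempty ((RedeiGroup r 1 ⧸ N) ≃* RedeiGroup (r - k) 1) := by
  have hr : 2 ≤ r := by omega
  have hne : orderOf a ≠ orderOf c := by
    rw [hao, hco]; exact (Nat.pow_lt_pow_right one_lt_two hk).ne
  have ha_x : a ∈ zpowers (Dx r 1) := zpowers_le.2
    (RedeiGroup.sq_mem_zpowers_Dx_of_mem_center hr hc)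
    (mem_zpowers_pow_of_orderOf_ne Nat.prime_two hco ha hne)
  have hN_x : N = zpowers (Dx r 1 ^ 2 ^ (r - k)) := by
    rw [hN, zpowers_eq_zpowers_pow_of_mul_orderOf_eq (by simp [RedeiGroup.orderOf_Dx]) ha_x]
    rw [hao, RedeiGroup.orderOf_Dx, ← pow_add, Nat.sub_add_cancel (by omega)]
  exact ⟨(QuotientGroup.quotientMulEquivOfEq
    (normalClosure_singleton_eq_of_eq_zpowers hN_x).symm).trans
      (RedeiGroup.quotientNormalClosureEquiv (by omega))⟩

theorem stmt19 (r k : ℕ) (hr : 2 ≤ r) (hk : k < r - 1)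
    (c : RedeiGroup r 1) (hc : c ∈ Subgroup.center (RedeiGroup r 1))
    (hco : orderOf c = 2 ^ (r - 1)) (hz : Dz r 1 ∉ Subgroup.zpowers c)
    (a : RedeiGroup r 1) (ha : a ∈ Subgroup.zpowers c) (hao : orderOf a = 2 ^ k)
    (N : Subgroup (RedeiGroup r 1)) [N.Normal] (hN : N = Subgroup.zpowers a) :
    Nonempty ((RedeiGroup r 1 ⧸ N) ≃* RedeiGroup (r - k) 1) :=
  stmt19_general r k hk c hc hco a ha hao N hN
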